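/- Let x, y be bases of a matroid M and w a weight function such that w(x) = w(y) is the minimum base weight. If for every bijection γ : x\y → y\x there exists u ∈ x\y with w(u) ≠ w(γ(u)), then x = y. Equivalently: any two minimum-weight bases differ only in elements that can be matched up with equal weights. -/

import Mathlib

/-!
Let `e` have maximal weight in `x \ y` and exchange it for some `f ∈ y \ x`; minimality of `x`
gives `w e ≤ w f`. Exchanging an element `g` of maximal weight in `y \ x` for some `e' ∈ x \ y`,
minimality of `y` gives `w f ≤ w g ≤ w e' ≤ w e`. Hence `w e = w f` and `x - e + f` is again a
minimum-weight base, closer to `y`; by induction there is always a weight-preserving bijection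
`x \ y → y \ x`, which `hno` rules out.
-/

open Set Function

section

variable {α β : Type*}

lemma finsum_mem_insert_sdiff_singleton_add [AddCommMonoid β] {w : α → β} {s : Set α} {e f : α}
    (hs : s.Finite) (he : e ∈ s) (hf : f ∉ s) :
    (∑ᶠ i ∈ insert f (s \ {e}), w i) + w e = (∑ᶠ i ∈ s, w i) + w f := by
  have hs_eq : ∑ᶠ i ∈ s, w i = w e + ∑ᶠ i ∈ s \ {e}, w i := by
    rw [← finsum_mem_insert w (show e ∉ s \ {e} by simp) hs.sdiff, insert_sdiff_singleton,
      insert_eq_of_mem he]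
  rw [finsum_mem_insert w (fun h => hf h.1) hs.sdiff, hs_eq]
  abel

lemma Set.insert_sdiff_singleton_sdiff_of_mem {s t : Set α} {e f : α} (hf : f ∈ t) :
    insert f (s \ {e}) \ t = (s \ t) \ {e} := by
  ext a
  by_cases haf : a = f
  · simp [haf, hf]
  · simp only [mem_sdiff, mem_insert_iff, mem_singleton_iff, haf, false_or]
    tauto

lemma Set.sdiff_insert_sdiff_singleton_of_notMem {s t : Set α} {e f : α} (he : e ∉ t) :
    t \ insert f (s \ {e}) = (t \ s) \ {f} := by
  ext a
  by_cases hae : a = e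
  · simp [hae, he]
  · simp only [mem_sdiff, mem_insert_iff, mem_singleton_iff, hae, not_or, not_and, not_not]
    tauto

def WeightMatched (w : α → β) (s t : Set α) : Prop :=
  ∃ φ : α → α, BijOn φ s t ∧ EqOn (w ∘ φ) w s

lemma WeightMatched.of_sdiff_singleton {w : α → β} {s t : Set α} {e f : α}
    (h : WeightMatched w (s \ {e}) (t \ {f})) (he : e ∈ s) (hf : f ∈ t) (hw : w f = w e) :
    WeightMatched w s t := by
  classical
  obtain ⟨φ, hφ, hφw⟩ := h
  have hφ_eq : EqOn (update φ e f) φ (s \ {e}) := fun u hu => update_of_ne hu.2 _ _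
  refine ⟨update φ e f, ?_, fun u hu => ?_⟩
  · have hbij := (hφ.congr hφ_eq.symm).insert (a := e) (by simp)
    rwa [update_self, insert_sdiff_singleton, insert_eq_of_mem he, insert_sdiff_singleton,
      insert_eq_of_mem hf] at hbij
  · obtain rfl | hue := eq_or_ne u e
    · simpa using hw
    · simpa [update_of_ne hue] using hφw ⟨hu, hue⟩

lemma WeightMatched.exists_equiv {w : α → β} {s t : Set α} (h : WeightMatched w s t) :
    ∃ γ : s ≃ t, ∀ u : s, w u = w (γ u) := by
  obtain ⟨φ, hφ, hφw⟩ := h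
  exact ⟨hφ.equiv φ, fun u => (hφw u.2).symm⟩

namespace Matroid

def IsMinWeightBase [AddCommMonoid β] [PartialOrder β] (M : Matroid α) (w : α → β)
    (B : Set α) : Prop :=
  M.IsBase B ∧ ∀ B', M.IsBase B' → ∑ᶠ e ∈ B, w e ≤ ∑ᶠ e ∈ B', w e

variable [AddCommMonoid β] [LinearOrder β] [IsOrderedCancelAddMonoid β]
  {M : Matroid α} [M.RankFinite] {w : α → β} {B B' : Set α} {e f : α}

lemma IsMinWeightBase.le_of_exchange (hB : M.IsMinWeightBase w B) (he : e ∈ B) (hf : f ∉ B)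
    (hB' : M.IsBase (insert f (B \ {e}))) : w e ≤ w f := by
  have h : (∑ᶠ i ∈ B, w i) + w e ≤ (∑ᶠ i ∈ insert f (B \ {e}), w i) + w e := by
    gcongr
    exact hB.2 _ hB'
  rw [finsum_mem_insert_sdiff_singleton_add hB.1.finite he hf] at h
  exact le_of_add_le_add_left h

lemma IsMinWeightBase.exists_exchange_weight_eq (hB : M.IsMinWeightBase w B)
    (hB' : M.IsMinWeightBase w B') (hne : (B \ B').Nonempty) :
    ∃ e ∈ B \ B', ∃ f ∈ B' \ B, w f = w e ∧ M.IsMinWeightBase w (insert f (B \ {e})) := by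
  obtain ⟨e, he, he_max⟩ := exists_max_image (B \ B') w hB.1.finite.sdiff hne
  obtain ⟨f, hf, hBf⟩ := hB.1.exchange hB'.1 he
  obtain ⟨g, hg, hg_max⟩ := exists_max_image (B' \ B) w hB'.1.finite.sdiff ⟨f, hf⟩
  obtain ⟨e', he', hB'g⟩ := hB'.1.exchange hB.1 hg
  have hfe : w f = w e := le_antisymm
    (calc w f ≤ w g := hg_max f hf
      _ ≤ w e' := hB'.le_of_exchange hg.1 he'.2 hB'g
      _ ≤ w e := he_max e' he')
    (hB.le_of_exchange he.1 hf.2 hBf)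
  have hsum := finsum_mem_insert_sdiff_singleton_add (w := w) hB.1.finite he.1 hf.2
  rw [hfe] at hsum
  exact ⟨e, he, f, hf, hfe, hBf, fun B'' hB'' => add_right_cancel hsum ▸ hB.2 B'' hB''⟩

theorem IsMinWeightBase.weightMatched {B B' : Set α} (hB : M.IsMinWeightBase w B)
    (hB' : M.IsMinWeightBase w B') : WeightMatched w (B \ B') (B' \ B) := by
  obtain hempty | hne := (B \ B').eq_empty_or_nonempty
  · obtain rfl := hB.1.eq_of_subset_isBase hB'.1 (sdiff_eq_empty.1 hempty)
    exact ⟨id, by simp, by simp⟩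
  obtain ⟨e, he, f, hf, hfe, hB''⟩ := hB.exists_exchange_weight_eq hB' hne
  have ih := IsMinWeightBase.weightMatched hB'' hB'
  rw [insert_sdiff_singleton_sdiff_of_mem hf.1, sdiff_insert_sdiff_singleton_of_notMem he.2] at ih
  exact ih.of_sdiff_singleton he hf hfe
termination_by (B \ B').ncard
decreasing_by
  rw [insert_sdiff_singleton_sdiff_of_mem hf.1]
  exact ncard_sdiff_singleton_lt_of_mem he hB.1.finite.sdiff

end Matroid

end

theorem min_weight_bases_eq_of_no_weight_bijection_general
    {α : Type*} [Fintype α] (M : Matroid α) (w : α → ℝ)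
    (x y : Set α) (hx : M.IsBase x) (hy : M.IsBase y)
    (hxmin : ∀ b : Set α, M.IsBase b → (∑ᶠ e ∈ x, w e) ≤ ∑ᶠ e ∈ b, w e)
    (hymin : ∀ b : Set α, M.IsBase b → (∑ᶠ e ∈ y, w e) ≤ ∑ᶠ e ∈ b, w e)
    (hno : ∀ γ : (x \ y : Set α) ≃ (y \ x : Set α),
      ∃ u : (x \ y : Set α), w u ≠ w (γ u)) :
    x = y := by
  obtain ⟨γ, hγ⟩ :=
    (Matroid.IsMinWeightBase.weightMatched ⟨hx, hxmin⟩ ⟨hy, hymin⟩).exists_equiv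
  obtain ⟨u, hu⟩ := hno γ
  exact absurd (hγ u) hu

/-- let `x, y` be minimum-weight bases of a matroid (with equal, minimum,
total weight). If every bijection `γ : x \ y ≃ y \ x` fails to preserve weights, i.e.
admits some `u ∈ x \ y` with `w u ≠ w (γ u)`, then `x = y`. -/
theorem min_weight_bases_eq_of_no_weight_bijection
    {α : Type*} [Fintype α] (M : Matroid α) (w : α → ℝ)
    (x y : Set α) (hx : M.IsBase x) (hy : M.IsBase y)
    (hxmin : ∀ b : Set α, M.IsBase b → (∑ᶠ e ∈ x, w e) ≤ ∑ᶠ e ∈ b, w e)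
    (hymin : ∀ b : Set α, M.IsBase b → (∑ᶠ e ∈ y, w e) ≤ ∑ᶠ e ∈ b, w e)
    (hw : (∑ᶠ e ∈ x, w e) = ∑ᶠ e ∈ y, w e)
    (hno : ∀ γ : (x \ y : Set α) ≃ (y \ x : Set α),
      ∃ u : (x \ y : Set α), w u ≠ w (γ u)) :
    x = y :=
  min_weight_bases_eq_of_no_weight_bijection_general M w x y hx hy hxmin hymin hno
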